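/- arXiv:1604.02859 — 6 statements merged into one kernel-verified Lean document; each statement's English description precedes it below -/
import Mathlib

section
/- Let A be a complex n×n matrix that is G-Hamiltonian with respect to an invertible Hermitian matrix G. If λ is an eigenvalue of A with Re(λ) = 0 whose algebraic multiplicity is 1 (a simple eigenvalue on the imaginary axis), then every nonzero eigenvector y of A for λ satisfies ⟨y, y⟩ = y*Gy ≠ 0. -/
/-!
Since `A` is `G`-Hamiltonian, `w ↦ yᴴ G w` is a left eigenvector of `A` for `-conj λ`, which is
`λ` on the imaginary axis; it is nonzero because `G` is invertible. A left eigenvector for a simple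
eigenvalue cannot vanish on the right eigenvector `y`: by Fitting's lemma the space is
`ker (A - λ)ᵏ ⊔ range (A - λ)ᵏ` for large `k`, the kernel lies in the generalized eigenspace, which
has dimension equal to the algebraic multiplicity and hence is the line through `y`, and every left
eigenvector vanishes on the range.
-/

open Matrix Module

namespace Module.End

variable {K V : Type*} [Field K] [AddCommGroup V] [Module K V] [FiniteDimensional K V]

theorem maxGenEigenspace_eq_span_of_rootMultiplicity_eq_one {f : End K V} {μ : K}
    (hμ : f.charpoly.rootMultiplicity μ = 1) {y : V} (hy : f.HasEigenvector μ y) :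
    f.maxGenEigenspace μ = K ∙ y :=
  eq_span_singleton_of_mem_of_finrank_eq_one (by rw [LinearMap.finrank_maxGenEigenspace_eq, hμ])
    (f.genEigenspace_le_maximal μ 1 (eigenspace_le_genEigenspace one_pos hy.1)) hy.2

theorem apply_ne_zero_of_rootMultiplicity_eq_one {f : End K V} {μ : K}
    (hμ : f.charpoly.rootMultiplicity μ = 1) {y : V} (hy : f.HasEigenvector μ y)
    {φ : Dual K V} (hφf : φ ∘ₗ f = μ • φ) (hφ : φ ≠ 0) : φ y ≠ 0 := by
  intro hφy
  apply hφ
  set g := f - μ • 1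
  obtain ⟨k, hk⟩ := Filter.eventually_atTop.mp g.eventually_codisjoint_ker_pow_range_pow
  have hker : LinearMap.ker (g ^ (k + 1)) ≤ LinearMap.ker φ := by
    rw [← genEigenspace_nat]
    grw [genEigenspace_le_maximal, maxGenEigenspace_eq_span_of_rootMultiplicity_eq_one hμ hy,
      Submodule.span_singleton_le_iff_mem]
    exact hφy
  have hφg : φ ∘ₗ g = 0 := by
    rw [LinearMap.comp_sub, hφf, LinearMap.comp_smul, one_eq_id, LinearMap.comp_id,
      sub_self]
  have hrange : LinearMap.range (g ^ (k + 1)) ≤ LinearMap.ker φ := by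
    rintro _ ⟨x, rfl⟩
    rw [pow_succ', LinearMap.mem_ker, mul_apply, ← LinearMap.comp_apply, hφg,
      LinearMap.zero_apply]
  rw [← LinearMap.ker_eq_top, eq_top_iff, ← (hk (k + 1) k.le_succ).eq_top]
  exact sup_le hker hrange

end Module.End

namespace Matrix

theorem dotProduct_ne_zero_of_rootMultiplicity_eq_one {K n : Type*} [Field K] [Fintype n]
    [DecidableEq n] {A : Matrix n n K} {μ : K} (hμ : A.charpoly.rootMultiplicity μ = 1)
    {v y : n → K} (hvA : v ᵥ* A = μ • v) (hv : v ≠ 0) (hAy : A *ᵥ y = μ • y) (hy : y ≠ 0) :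
    v ⬝ᵥ y ≠ 0 := by
  have hφ : dotProductEquiv K n v ∘ₗ toLin' A = μ • dotProductEquiv K n v := by
    refine LinearMap.ext fun w => ?_
    simp only [LinearMap.comp_apply, dotProductEquiv_apply_apply, toLin'_apply,
      LinearMap.smul_apply, dotProduct_mulVec, hvA, smul_dotProduct]
  exact Module.End.apply_ne_zero_of_rootMultiplicity_eq_one (by rwa [charpoly_toLin'])
    ⟨by simpa [Module.End.mem_eigenspace_iff] using hAy, hy⟩ hφ (by simpa using hv)

theorem star_vecMul_vecMul_eq_neg_star_smul {R m : Type*} [CommRing R] [StarRing R] [Fintype m]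
    {G A : Matrix m m R} (hA : Aᴴ * G + G * A = 0) {μ : R} {y : m → R} (hAy : A *ᵥ y = μ • y) :
    (star y ᵥ* G) ᵥ* A = -star μ • (star y ᵥ* G) := by
  rw [vecMul_vecMul, eq_neg_of_add_eq_zero_right hA, vecMul_neg, ← vecMul_vecMul, ← star_mulVec,
    hAy, star_smul, smul_vecMul, neg_smul]

end Matrix

theorem ghamiltonian_simple_imaginary_eigenvector_nondegenerate_general {n : ℕ}
    (G A : Matrix (Fin n) (Fin n) ℂ) (hGinv : IsUnit G.det)
    (hA : Aᴴ * G + G * A = 0) (lam : ℂ)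
    (hre : lam.re = 0) (hsimple : (A.charpoly).rootMultiplicity lam = 1)
    (y : Fin n → ℂ) (hy : y ≠ 0) (heig : A *ᵥ y = lam • y) :
    star y ⬝ᵥ (G *ᵥ y) ≠ 0 := by
  have hconj : star lam = -lam := Complex.ext (by simp [hre]) (by simp)
  have hleft : (star y ᵥ* G) ᵥ* A = lam • (star y ᵥ* G) := by
    rw [star_vecMul_vecMul_eq_neg_star_smul hA heig, hconj, neg_neg]
  have hv : star y ᵥ* G ≠ 0 := by
    have hG : IsUnit G := (isUnit_iff_isUnit_det G).mpr hGinv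
    rw [← zero_vecMul G, (vecMul_injective_iff_isUnit.mpr hG).ne_iff]
    exact star_ne_zero.mpr hy
  rw [dotProduct_mulVec]
  exact dotProduct_ne_zero_of_rootMultiplicity_eq_one hsimple hleft hv heig hy

/-- For a simple eigenvalue `λ` of a `G`-Hamiltonian matrix `A` on the imaginary axis,
every nonzero eigenvector `y` satisfies `⟨y, y⟩ = yᴴ G y ≠ 0`. -/
theorem ghamiltonian_simple_imaginary_eigenvector_nondegenerate {n : ℕ}
    (G A : Matrix (Fin n) (Fin n) ℂ) (hG : G.IsHermitian) (hGinv : IsUnit G.det)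
    (hA : Aᴴ * G + G * A = 0) (lam : ℂ) (hspec : lam ∈ spectrum ℂ A)
    (hre : lam.re = 0) (hsimple : (A.charpoly).rootMultiplicity lam = 1)
    (y : Fin n → ℂ) (hy : y ≠ 0) (heig : A *ᵥ y = lam • y) :
    star y ⬝ᵥ (G *ᵥ y) ≠ 0 :=
  ghamiltonian_simple_imaginary_eigenvector_nondegenerate_general G A hGinv hA lam hre hsimple y hy
    heig
end

section
/- Let A be a complex n×n matrix that is G-Hamiltonian with respect to an invertible Hermitian matrix G, and let λ be a purely imaginary eigenvalue of A that is semisimple (its algebraic multiplicity equals its geometric multiplicity). Then the Hermitian form (y, z) ↦ z*Gy restricted to the eigenspace ker(A − λI) is nondegenerate: for every nonzero y ∈ ker(A − λI) there exists z ∈ ker(A − λI) with z*Gy ≠ 0. -/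
/-!
Put `B = A - λ` and suppose `y ∈ ker B` is `G`-orthogonal to `ker B`. Then `G y ∈ (ker B)ᗮ`, which
is the range of `Bᴴ`. As `λ` is purely imaginary, `Bᴴ = Aᴴ + λ`, and the Hamiltonian identity gives
`Bᴴ G = -G B`; hence `G y ∈ G (range B)`, i.e. `y ∈ ker B ∩ range B`. Semisimplicity says that the
eigenspace is the whole generalized eigenspace, so `ker B² = ker B`, and `ker B ∩ range B = 0`.
-/

open Matrix

namespace Module.End

theorem eigenspace_eq_maxGenEigenspace_of_rootMultiplicity_eq {K V : Type*} [Field K]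
    [AddCommGroup V] [Module K V] [FiniteDimensional K V] {f : End K V} {μ : K}
    (h : f.charpoly.rootMultiplicity μ = Module.finrank K (f.eigenspace μ)) :
    f.eigenspace μ = f.maxGenEigenspace μ :=
  Submodule.eq_of_le_of_finrank_eq eigenspace_le_maxGenEigenspace
    (by rw [LinearMap.finrank_maxGenEigenspace_eq, h])

theorem disjoint_eigenspace_range_of_eigenspace_eq_maxGenEigenspace {R M : Type*} [CommRing R]
    [AddCommGroup M] [Module R M] {f : End R M} {μ : R}
    (h : f.eigenspace μ = f.maxGenEigenspace μ) :
    Disjoint (f.eigenspace μ) (LinearMap.range (f - μ • 1)) := by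
  rw [Submodule.disjoint_def]
  rintro _ hx ⟨v, rfl⟩
  have hv : v ∈ f.eigenspace μ := by
    rw [h, mem_maxGenEigenspace]
    exact ⟨2, by rwa [pow_two, mul_apply, ← LinearMap.mem_ker, ← eigenspace_def]⟩
  rwa [eigenspace_def] at hv

end Module.End

namespace Matrix

theorem exists_conjTranspose_mulVec_eq_of_forall_dotProduct_eq_zero {𝕜 m n : Type*} [RCLike 𝕜]
    [Fintype m] [Fintype n] [DecidableEq m] [DecidableEq n] (B : Matrix m n 𝕜) {x : n → 𝕜}
    (h : ∀ z, B *ᵥ z = 0 → star z ⬝ᵥ x = 0) : ∃ w, Bᴴ *ᵥ w = x := by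
  have hx : WithLp.toLp 2 x ∈ (toEuclideanLin B).kerᗮ := by
    rw [Submodule.mem_orthogonal]
    intro z hz
    rw [EuclideanSpace.inner_eq_star_dotProduct, dotProduct_comm]
    exact h _ (congrArg WithLp.ofLp hz)
  rw [LinearMap.orthogonal_ker, ← toEuclideanLin_conjTranspose_eq_adjoint] at hx
  obtain ⟨w, hw⟩ := hx
  exact ⟨WithLp.ofLp w, congrArg WithLp.ofLp hw⟩

theorem conjTranspose_sub_smul_one_mul_eq_neg {n : Type*} [Fintype n] [DecidableEq n]
    {G A : Matrix n n ℂ} (hA : Aᴴ * G + G * A = 0) {lam : ℂ} (hre : lam.re = 0) :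
    (A - lam • 1)ᴴ * G = -(G * (A - lam • 1)) := by
  have hconj : star lam = -lam := Complex.ext (by simp [hre]) (by simp)
  rw [conjTranspose_sub, conjTranspose_smul, conjTranspose_one, hconj, sub_mul,
    eq_neg_of_add_eq_zero_left hA, mul_sub, neg_smul, neg_mul, smul_mul, Matrix.mul_smul,
    one_mul, mul_one]
  abel

end Matrix

theorem ghamiltonian_semisimple_imaginary_form_nondegenerate_general {n : ℕ}
    (G A : Matrix (Fin n) (Fin n) ℂ) (hGinv : IsUnit G.det)
    (hA : Aᴴ * G + G * A = 0) (lam : ℂ)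
    (hre : lam.re = 0)
    (hsemi : (A.charpoly).rootMultiplicity lam =
      Module.finrank ℂ (Module.End.eigenspace (Matrix.toLin' A) lam)) :
    ∀ y ∈ Module.End.eigenspace (Matrix.toLin' A) lam, y ≠ 0 →
      ∃ z ∈ Module.End.eigenspace (Matrix.toLin' A) lam, star z ⬝ᵥ (G *ᵥ y) ≠ 0 := by
  intro y hy hy0
  by_contra! hperp
  set B := A - lam • (1 : Matrix (Fin n) (Fin n) ℂ)
  have hBlin : toLin' A - lam • 1 = toLin' B := by
    rw [map_sub, map_smul, toLin'_one, Module.End.one_eq_id]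
  have hker (z : Fin n → ℂ) : z ∈ Module.End.eigenspace (toLin' A) lam ↔ B *ᵥ z = 0 := by
    rw [Module.End.eigenspace_def, hBlin, LinearMap.mem_ker, toLin'_apply]
  obtain ⟨w, hw⟩ := B.exists_conjTranspose_mulVec_eq_of_forall_dotProduct_eq_zero
    fun z hz => hperp z ((hker z).mpr hz)
  have hy_range : y = B *ᵥ -(G⁻¹ *ᵥ w) := by
    refine mulVec_injective_of_isUnit ((isUnit_iff_isUnit_det G).mpr hGinv) ?_
    calc G *ᵥ y = (Bᴴ * G) *ᵥ (G⁻¹ *ᵥ w) := by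
          rw [← hw, mulVec_mulVec, Matrix.mul_assoc, mul_nonsing_inv G hGinv, Matrix.mul_one]
      _ = G *ᵥ (B *ᵥ -(G⁻¹ *ᵥ w)) := by
          rw [conjTranspose_sub_smul_one_mul_eq_neg hA hre, neg_mulVec, ← mulVec_mulVec,
            mulVec_neg, mulVec_neg]
  have hsemisimple : Module.End.eigenspace (toLin' A) lam =
      Module.End.maxGenEigenspace (toLin' A) lam :=
    Module.End.eigenspace_eq_maxGenEigenspace_of_rootMultiplicity_eq
      (by rwa [charpoly_toLin'])
  refine hy0 (Submodule.disjoint_def.mp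
    (Module.End.disjoint_eigenspace_range_of_eigenspace_eq_maxGenEigenspace hsemisimple)
    y hy ⟨-(G⁻¹ *ᵥ w), ?_⟩)
  rw [hBlin, toLin'_apply, ← hy_range]

/-- For a purely imaginary semisimple eigenvalue `λ` of a `G`-Hamiltonian matrix `A`,
the Hermitian form `(y, z) ↦ zᴴ G y` is nondegenerate on the eigenspace `ker (A - λ I)`. -/
theorem ghamiltonian_semisimple_imaginary_form_nondegenerate {n : ℕ}
    (G A : Matrix (Fin n) (Fin n) ℂ) (hG : G.IsHermitian) (hGinv : IsUnit G.det)
    (hA : Aᴴ * G + G * A = 0) (lam : ℂ) (hspec : lam ∈ spectrum ℂ A)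
    (hre : lam.re = 0)
    (hsemi : (A.charpoly).rootMultiplicity lam =
      Module.finrank ℂ (Module.End.eigenspace (Matrix.toLin' A) lam)) :
    ∀ y ∈ Module.End.eigenspace (Matrix.toLin' A) lam, y ≠ 0 →
      ∃ z ∈ Module.End.eigenspace (Matrix.toLin' A) lam, star z ⬝ᵥ (G *ᵥ y) ≠ 0 :=
  ghamiltonian_semisimple_imaginary_form_nondegenerate_general G A hGinv hA lam hre hsemi
end

section
/- Let A be a complex n×n matrix that is G-Hamiltonian with respect to an invertible Hermitian matrix G, let λ be a purely imaginary semisimple eigenvalue of A, and let V = ker(A − λI) be its eigenspace. Then the following are equivalent: (i) there exists a nonzero y ∈ V with y*Gy = 0; (ii) there exist y₁, y₂ ∈ V with y₁*Gy₁ > 0 and y₂*Gy₂ < 0. (An eigenvalue satisfying these equivalent conditions is called of mixed kind.) -/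
open Matrix Polynomial ComplexOrder

/-! Write `⟨x, y⟩ = xᴴ G y`. Since `A` is `G`-Hamiltonian and `conj λ = -λ`, the range of `A - λ`
is `⟨·,·⟩`-orthogonal to `V`; semisimplicity makes `V ⊕ range (A - λ)` the whole space, so the
invertibility of `G` forces the form to be nondegenerate on `V`. An isotropic `y ≠ 0` then has a
partner `w ∈ V` with `⟨y, w⟩ = 1`, and `⟨w + t y, w + t y⟩ = ⟨w, w⟩ + 2t` takes both signs for
real `t`. Conversely, the intermediate value theorem on the segment from `y₂` to `y₁` gives an
isotropic vector, which is nonzero because `y₁` and `y₂` cannot be proportional. -/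

section Semisimple

variable {K M : Type*} [Field K] [AddCommGroup M] [Module K M] [FiniteDimensional K M]

theorem LinearMap.isCompl_ker_range_of_ker_sq_le {f : Module.End K M}
    (h : LinearMap.ker (f ^ 2) ≤ LinearMap.ker f) :
    IsCompl (LinearMap.ker f) (LinearMap.range f) := by
  refine (Submodule.isCompl_iff_disjoint _ _ ?_).mpr ?_
  · rw [add_comm, LinearMap.finrank_range_add_finrank_ker]
  · rw [Submodule.disjoint_def]
    rintro _ hfx ⟨x, rfl⟩
    exact h (by rwa [LinearMap.mem_ker, pow_two, Module.End.mul_apply])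

theorem Module.End.maxGenEigenspace_eq_eigenspace_of_rootMultiplicity_eq {f : Module.End K M}
    {μ : K} (h : f.charpoly.rootMultiplicity μ = Module.finrank K (f.eigenspace μ)) :
    f.maxGenEigenspace μ = f.eigenspace μ :=
  (Submodule.eq_of_le_of_finrank_le eigenspace_le_maxGenEigenspace
    (by rw [LinearMap.finrank_maxGenEigenspace_eq, h])).symm

theorem Module.End.isCompl_eigenspace_range_of_rootMultiplicity_eq {f : Module.End K M}
    {μ : K} (h : f.charpoly.rootMultiplicity μ = Module.finrank K (f.eigenspace μ)) :
    IsCompl (f.eigenspace μ) (LinearMap.range (f - μ • 1)) := by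
  rw [eigenspace_def]
  refine LinearMap.isCompl_ker_range_of_ker_sq_le ?_
  calc LinearMap.ker ((f - μ • 1) ^ 2) = f.genEigenspace μ 2 := genEigenspace_nat.symm
    _ ≤ f.maxGenEigenspace μ := genEigenspace_le_maximal f μ 2
    _ = LinearMap.ker (f - μ • 1) := by
      rw [maxGenEigenspace_eq_eigenspace_of_rootMultiplicity_eq h, eigenspace_def]

end Semisimple

namespace Matrix

variable {ι : Type*} [Fintype ι] {G : Matrix ι ι ℂ}

theorem IsHermitian.star_star_dotProduct_mulVec (hG : G.IsHermitian) (x y : ι → ℂ) :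
    star (star x ⬝ᵥ (G *ᵥ y)) = star y ⬝ᵥ (G *ᵥ x) := by
  rw [star_dotProduct, star_mulVec, star_star, dotProduct_mulVec, hG.eq]

theorem IsHermitian.ofReal_re_star_dotProduct_mulVec_self (hG : G.IsHermitian) (x : ι → ℂ) :
    (((star x ⬝ᵥ (G *ᵥ x)).re : ℝ) : ℂ) = star x ⬝ᵥ (G *ᵥ x) :=
  Complex.ext rfl (by simpa using (hG.im_star_dotProduct_mulVec_self x).symm)

theorem star_dotProduct_mulVec_ofReal_smul_self (x : ι → ℂ) (t : ℝ) :
    star ((t : ℂ) • x) ⬝ᵥ (G *ᵥ ((t : ℂ) • x)) = (t ^ 2 : ℝ) * (star x ⬝ᵥ (G *ᵥ x)) := by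
  simp only [star_smul, mulVec_smul, smul_dotProduct, dotProduct_smul, Complex.star_def,
    Complex.conj_ofReal, smul_eq_mul]
  push_cast
  ring

theorem IsHermitian.star_dotProduct_mulVec_add_smul_self (hG : G.IsHermitian) {y w : ι → ℂ}
    (hy : star y ⬝ᵥ (G *ᵥ y) = 0) (hyw : star y ⬝ᵥ (G *ᵥ w) = 1) {t : ℂ} (ht : star t = t) :
    star (w + t • y) ⬝ᵥ (G *ᵥ (w + t • y)) = star w ⬝ᵥ (G *ᵥ w) + 2 * t := by
  have hwy : star w ⬝ᵥ (G *ᵥ y) = 1 := by rw [← hG.star_star_dotProduct_mulVec, hyw, star_one]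
  simp only [star_add, star_smul, mulVec_add, mulVec_smul, add_dotProduct, dotProduct_add,
    smul_dotProduct, dotProduct_smul, ht, hy, hyw, hwy, smul_eq_mul]
  ring

theorem IsHermitian.exists_pos_neg_of_isotropic (hG : G.IsHermitian) {V : Submodule ℂ (ι → ℂ)}
    {y z : ι → ℂ} (hyV : y ∈ V) (hzV : z ∈ V) (hy : star y ⬝ᵥ (G *ᵥ y) = 0)
    (hyz : star y ⬝ᵥ (G *ᵥ z) ≠ 0) :
    ∃ y₁ ∈ V, ∃ y₂ ∈ V, 0 < star y₁ ⬝ᵥ (G *ᵥ y₁) ∧ star y₂ ⬝ᵥ (G *ᵥ y₂) < 0 := by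
  set w := (star y ⬝ᵥ (G *ᵥ z))⁻¹ • z
  have hwV : w ∈ V := V.smul_mem _ hzV
  have hyw : star y ⬝ᵥ (G *ᵥ w) = 1 := by
    rw [mulVec_smul, dotProduct_smul, smul_eq_mul, inv_mul_cancel₀ hyz]
  set q := (star w ⬝ᵥ (G *ᵥ w)).re
  have hq : star w ⬝ᵥ (G *ᵥ w) = q := (hG.ofReal_re_star_dotProduct_mulVec_self w).symm
  have hval : ∀ s : ℝ, star (w + (s : ℂ) • y) ⬝ᵥ (G *ᵥ (w + (s : ℂ) • y)) = (q + 2 * s : ℝ) := by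
    intro s
    rw [hG.star_dotProduct_mulVec_add_smul_self hy hyw (Complex.conj_ofReal s), hq]
    push_cast; ring
  refine ⟨w + ((1 - q / 2 : ℝ) : ℂ) • y, V.add_mem hwV (V.smul_mem _ hyV),
    w + ((-1 - q / 2 : ℝ) : ℂ) • y, V.add_mem hwV (V.smul_mem _ hyV), ?_, ?_⟩
  · rw [hval, Complex.zero_lt_real]; linarith
  · rw [hval, ← Complex.ofReal_zero, Complex.real_lt_real]; linarith

theorem IsHermitian.exists_isotropic_of_pos_of_neg (hG : G.IsHermitian)
    {V : Submodule ℂ (ι → ℂ)} {y₁ y₂ : ι → ℂ} (hy₁V : y₁ ∈ V) (hy₂V : y₂ ∈ V)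
    (hy₁ : 0 < star y₁ ⬝ᵥ (G *ᵥ y₁)) (hy₂ : star y₂ ⬝ᵥ (G *ᵥ y₂) < 0) :
    ∃ y ∈ V, y ≠ 0 ∧ star y ⬝ᵥ (G *ᵥ y) = 0 := by
  set p : ℝ → ι → ℂ := fun t ↦ ((1 - t : ℝ) : ℂ) • y₂ + (t : ℂ) • y₁
  set f : ℝ → ℝ := fun t ↦ (star (p t) ⬝ᵥ (G *ᵥ p t)).re
  have hf : Continuous f := by fun_prop
  rw [Complex.lt_def, Complex.zero_re] at hy₁ hy₂
  have hf0 : f 0 < 0 := by simpa [f, p] using hy₂.1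
  have hf1 : 0 < f 1 := by simpa [f, p] using hy₁.1
  obtain ⟨t, -, ht⟩ := intermediate_value_Icc zero_le_one hf.continuousOn ⟨hf0.le, hf1.le⟩
  refine ⟨p t, V.add_mem (V.smul_mem _ hy₂V) (V.smul_mem _ hy₁V), fun h0 ↦ ?_, ?_⟩
  · have hdep : (t : ℂ) • y₁ = ((t - 1 : ℝ) : ℂ) • y₂ := by
      rw [← sub_eq_zero, ← h0]; push_cast; module
    have := congrArg (fun x ↦ (star x ⬝ᵥ (G *ᵥ x)).re) hdep
    simp only [star_dotProduct_mulVec_ofReal_smul_self, Complex.re_ofReal_mul] at this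
    have ht0 : t ^ 2 * (star y₁ ⬝ᵥ (G *ᵥ y₁)).re = 0 := by
      nlinarith [mul_nonneg (sq_nonneg t) hy₁.1.le,
        mul_nonpos_of_nonneg_of_nonpos (sq_nonneg (t - 1)) hy₂.1.le]
    obtain rfl : t = 0 := by simpa [hy₁.1.ne'] using ht0
    norm_num at this
    linarith [hy₂.1]
  · rw [← hG.ofReal_re_star_dotProduct_mulVec_self, ← Complex.ofReal_zero]
    exact congrArg _ ht

theorem IsHermitian.exists_isotropic_iff_exists_pos_neg (hG : G.IsHermitian)
    {V : Submodule ℂ (ι → ℂ)}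
    (hV : ∀ y ∈ V, y ≠ 0 → ∃ z ∈ V, star y ⬝ᵥ (G *ᵥ z) ≠ 0) :
    (∃ y ∈ V, y ≠ 0 ∧ star y ⬝ᵥ (G *ᵥ y) = 0) ↔
      ∃ y₁ ∈ V, ∃ y₂ ∈ V, 0 < star y₁ ⬝ᵥ (G *ᵥ y₁) ∧ star y₂ ⬝ᵥ (G *ᵥ y₂) < 0 := by
  constructor
  · rintro ⟨y, hyV, hy0, hy⟩
    obtain ⟨z, hzV, hyz⟩ := hV y hyV hy0
    exact hG.exists_pos_neg_of_isotropic hyV hzV hy hyz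
  · rintro ⟨y₁, hy₁V, y₂, hy₂V, hy₁, hy₂⟩
    exact hG.exists_isotropic_of_pos_of_neg hy₁V hy₂V hy₁ hy₂

theorem exists_mem_star_dotProduct_mulVec_ne_zero_of_sup_eq_top [DecidableEq ι]
    (hG : IsUnit G.det) {V W : Submodule ℂ (ι → ℂ)} (hVW : V ⊔ W = ⊤) {y : ι → ℂ}
    (hyW : ∀ w ∈ W, star y ⬝ᵥ (G *ᵥ w) = 0) (hy : y ≠ 0) :
    ∃ z ∈ V, star y ⬝ᵥ (G *ᵥ z) ≠ 0 := by
  obtain ⟨v, hvV, w, hwW, hvw⟩ :=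
    Submodule.mem_sup.mp (hVW ▸ Submodule.mem_top : G⁻¹ *ᵥ y ∈ V ⊔ W)
  refine ⟨v, hvV, fun hv ↦ hy ?_⟩
  have : star y ⬝ᵥ (G *ᵥ (G⁻¹ *ᵥ y)) = 0 := by
    rw [← hvw, mulVec_add, dotProduct_add, hv, hyW w hwW, add_zero]
  rwa [mulVec_mulVec, mul_nonsing_inv G hG, one_mulVec, dotProduct_star_self_eq_zero] at this

theorem star_dotProduct_mulVec_sub_smul_eq_zero {A : Matrix ι ι ℂ} (hA : Aᴴ * G + G * A = 0)
    {μ : ℂ} (hμ : μ.re = 0) {y : ι → ℂ} (hy : A *ᵥ y = μ • y) (x : ι → ℂ) :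
    star y ⬝ᵥ (G *ᵥ (A *ᵥ x - μ • x)) = 0 := by
  have hμ' : star μ = -μ := Complex.ext (by simp [hμ]) (by simp)
  have hGA : star y ⬝ᵥ (G *ᵥ (A *ᵥ x)) = μ * (star y ⬝ᵥ (G *ᵥ x)) :=
    calc star y ⬝ᵥ (G *ᵥ (A *ᵥ x)) = -(star y ⬝ᵥ ((Aᴴ * G) *ᵥ x)) := by
          rw [mulVec_mulVec, eq_neg_of_add_eq_zero_right hA, neg_mulVec, dotProduct_neg]
      _ = -(star (A *ᵥ y) ⬝ᵥ (G *ᵥ x)) := by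
          rw [← mulVec_mulVec, dotProduct_mulVec, star_mulVec]
      _ = μ * (star y ⬝ᵥ (G *ᵥ x)) := by
          rw [hy, star_smul, smul_dotProduct, hμ', smul_eq_mul, neg_mul, neg_neg]
  rw [mulVec_sub, mulVec_smul, dotProduct_sub, dotProduct_smul, hGA, smul_eq_mul, sub_self]

theorem exists_mem_eigenspace_star_dotProduct_mulVec_ne_zero [DecidableEq ι] {A : Matrix ι ι ℂ}
    (hG : IsUnit G.det) (hA : Aᴴ * G + G * A = 0) {μ : ℂ} (hμ : μ.re = 0)
    (hsemi : A.charpoly.rootMultiplicity μ =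
      Module.finrank ℂ (Module.End.eigenspace (toLin' A) μ))
    {y : ι → ℂ} (hy : y ∈ Module.End.eigenspace (toLin' A) μ) (hy0 : y ≠ 0) :
    ∃ z ∈ Module.End.eigenspace (toLin' A) μ, star y ⬝ᵥ (G *ᵥ z) ≠ 0 := by
  have hcompl := Module.End.isCompl_eigenspace_range_of_rootMultiplicity_eq
    (f := toLin' A) (by rwa [charpoly_toLin'])
  refine exists_mem_star_dotProduct_mulVec_ne_zero_of_sup_eq_top hG hcompl.sup_eq_top ?_ hy0
  rintro _ ⟨x, rfl⟩
  have hAy : A *ᵥ y = μ • y := by simpa using Module.End.mem_eigenspace_iff.mp hy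
  simpa using star_dotProduct_mulVec_sub_smul_eq_zero hA hμ hAy x

end Matrix

theorem ghamiltonian_mixed_kind_iff_general {n : ℕ}
    (G A : Matrix (Fin n) (Fin n) ℂ) (hG : G.IsHermitian) (hGinv : IsUnit G.det)
    (hA : Aᴴ * G + G * A = 0) (lam : ℂ)
    (hre : lam.re = 0)
    (hsemi : (A.charpoly).rootMultiplicity lam =
      Module.finrank ℂ (Module.End.eigenspace (Matrix.toLin' A) lam)) :
    (∃ y ∈ Module.End.eigenspace (Matrix.toLin' A) lam, y ≠ 0 ∧
        star y ⬝ᵥ (G *ᵥ y) = 0) ↔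
      (∃ y₁ ∈ Module.End.eigenspace (Matrix.toLin' A) lam,
        ∃ y₂ ∈ Module.End.eigenspace (Matrix.toLin' A) lam,
          0 < star y₁ ⬝ᵥ (G *ᵥ y₁) ∧ star y₂ ⬝ᵥ (G *ᵥ y₂) < 0) :=
  hG.exists_isotropic_iff_exists_pos_neg fun _ hy hy0 ↦
    exists_mem_eigenspace_star_dotProduct_mulVec_ne_zero hGinv hA hre hsemi hy hy0

/-- For a purely imaginary semisimple eigenvalue `λ` of a `G`-Hamiltonian matrix `A` with
eigenspace `V`, there exists a nonzero `y ∈ V` with `yᴴ G y = 0` if and only if there exist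
`y₁, y₂ ∈ V` with `y₁ᴴ G y₁ > 0` and `y₂ᴴ G y₂ < 0` (the eigenvalue is of mixed kind). -/
theorem ghamiltonian_mixed_kind_iff {n : ℕ}
    (G A : Matrix (Fin n) (Fin n) ℂ) (hG : G.IsHermitian) (hGinv : IsUnit G.det)
    (hA : Aᴴ * G + G * A = 0) (lam : ℂ) (hspec : lam ∈ spectrum ℂ A)
    (hre : lam.re = 0)
    (hsemi : (A.charpoly).rootMultiplicity lam =
      Module.finrank ℂ (Module.End.eigenspace (Matrix.toLin' A) lam)) :
    (∃ y ∈ Module.End.eigenspace (Matrix.toLin' A) lam, y ≠ 0 ∧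
        star y ⬝ᵥ (G *ᵥ y) = 0) ↔
      (∃ y₁ ∈ Module.End.eigenspace (Matrix.toLin' A) lam,
        ∃ y₂ ∈ Module.End.eigenspace (Matrix.toLin' A) lam,
          0 < star y₁ ⬝ᵥ (G *ᵥ y₁) ∧ star y₂ ⬝ᵥ (G *ᵥ y₂) < 0) :=
  ghamiltonian_mixed_kind_iff_general G A hG hGinv hA lam hre hsemi
end

section
/- Let ωp1, ωp2, a, b be real numbers with ωp1 ≠ 0 and ωp2 ≠ 0, and let G be the Hermitian 4×4 matrix G = [[0, 0, iωp2², 0], [0, 0, 0, iωp1²], [−iωp2², 0, 2a·ωp2², 0], [0, −iωp1², 0, 2b·ωp1²]]. Then the eigenvalues of G (with multiplicity) are exactly the four real numbers b·ωp1² − ωp1²·√(1 + b²), b·ωp1² + ωp1²·√(1 + b²), a·ωp2² − ωp2²·√(1 + a²), and a·ωp2² + ωp2²·√(1 + a²). -/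
open Matrix Polynomial

/-!
The two species decouple: `G` is block diagonal in the coordinate pairs `{0, 2}` (species 2) and
`{1, 3}` (species 1), so its characteristic polynomial is the product of those of the two blocks
`[[0, iω²], [-iω², 2cω²]]`. Such a block has trace `2cω²` and determinant `-ω⁴`, which are the sum
and the product of `cω² ± ω²√(1 + c²)`.
-/

namespace Polynomial

theorem roots_X_sq_sub_C_mul_X_add_C {R : Type*} [CommRing R] [IsDomain R] (r s : R) :
    (X ^ 2 - C (r + s) * X + C (r * s)).roots = {r, s} := by
  have hfactor : X ^ 2 - C (r + s) * X + C (r * s) = (X - C r) * (X - C s) := by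
    simp only [C_add, C_mul]; ring
  rw [hfactor, roots_mul (mul_ne_zero (X_sub_C_ne_zero r) (X_sub_C_ne_zero s)),
    roots_X_sub_C, roots_X_sub_C]
  rfl

end Polynomial

namespace Matrix

section BlockDiagonal

variable {n o R : Type*} [Fintype n] [DecidableEq n] [Fintype o] [DecidableEq o] [CommRing R]

theorem charmatrix_blockDiagonal (M : o → Matrix n n R) :
    charmatrix (blockDiagonal M) = blockDiagonal fun k => charmatrix (M k) := by
  ext ⟨i, k⟩ ⟨j, k'⟩
  by_cases hk : k = k' <;> by_cases hij : i = j <;> simp [blockDiagonal_apply, hk, hij]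

theorem charpoly_blockDiagonal (M : o → Matrix n n R) :
    (blockDiagonal M).charpoly = ∏ k, (M k).charpoly := by
  rw [charpoly, charmatrix_blockDiagonal, det_blockDiagonal]
  rfl

end BlockDiagonal

theorem roots_charpoly_fin_two {R : Type*} [CommRing R] [IsDomain R]
    {M : Matrix (Fin 2) (Fin 2) R} {r s : R} (htrace : M.trace = r + s) (hdet : M.det = r * s) :
    M.charpoly.roots = {r, s} := by
  rw [charpoly_fin_two, htrace, hdet, roots_X_sq_sub_C_mul_X_add_C]

end Matrix

def speciesBlock (ω c : ℝ) : Matrix (Fin 2) (Fin 2) ℂ :=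
  !![0, Complex.I * (ω : ℂ) ^ 2; -Complex.I * (ω : ℂ) ^ 2, 2 * (c : ℂ) * (ω : ℂ) ^ 2]

theorem roots_charpoly_speciesBlock (ω c : ℝ) :
    (speciesBlock ω c).charpoly.roots =
      {((c * ω ^ 2 - ω ^ 2 * Real.sqrt (1 + c ^ 2) : ℝ) : ℂ),
       ((c * ω ^ 2 + ω ^ 2 * Real.sqrt (1 + c ^ 2) : ℝ) : ℂ)} := by
  have hsqrt : ((Real.sqrt (1 + c ^ 2) : ℝ) : ℂ) ^ 2 = 1 + (c : ℂ) ^ 2 := by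
    exact_mod_cast Real.sq_sqrt (by positivity : (0 : ℝ) ≤ 1 + c ^ 2)
  apply roots_charpoly_fin_two
  · simp [speciesBlock, trace_fin_two]; ring
  · simp [speciesBlock, det_fin_two]
    linear_combination (ω : ℂ) ^ 4 * Complex.I_sq + (ω : ℂ) ^ 4 * hsqrt

/-- `finProdFinEquiv` sends `(i, k)` to `k + 2 * i`, so block `k` occupies the indices `k, k + 2`. -/
theorem twoStream_matrix_eq_reindex_blockDiagonal (ωp1 ωp2 a b : ℝ) :
    (!![0, 0, Complex.I*(ωp2:ℂ)^2, 0;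
        0, 0, 0, Complex.I*(ωp1:ℂ)^2;
        -Complex.I*(ωp2:ℂ)^2, 0, 2*(a:ℂ)*(ωp2:ℂ)^2, 0;
        0, -Complex.I*(ωp1:ℂ)^2, 0, 2*(b:ℂ)*(ωp1:ℂ)^2] : Matrix (Fin 4) (Fin 4) ℂ) =
      reindex finProdFinEquiv finProdFinEquiv
        (blockDiagonal ![speciesBlock ωp2 a, speciesBlock ωp1 b]) := by
  ext i j
  fin_cases i <;> fin_cases j <;>
    simp [speciesBlock, finProdFinEquiv, blockDiagonal_apply, Fin.modNat, Fin.divNat]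

theorem warm_two_stream_G_eigenvalues_general (ωp1 ωp2 a b : ℝ)
    (G : Matrix (Fin 4) (Fin 4) ℂ)
    (hG : G = !![0, 0, Complex.I*(ωp2:ℂ)^2, 0;
                 0, 0, 0, Complex.I*(ωp1:ℂ)^2;
                 -Complex.I*(ωp2:ℂ)^2, 0, 2*(a:ℂ)*(ωp2:ℂ)^2, 0;
                 0, -Complex.I*(ωp1:ℂ)^2, 0, 2*(b:ℂ)*(ωp1:ℂ)^2]) :
    G.charpoly.roots =
      {((b*ωp1^2 - ωp1^2*Real.sqrt (1+b^2) : ℝ) : ℂ),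
       ((b*ωp1^2 + ωp1^2*Real.sqrt (1+b^2) : ℝ) : ℂ),
       ((a*ωp2^2 - ωp2^2*Real.sqrt (1+a^2) : ℝ) : ℂ),
       ((a*ωp2^2 + ωp2^2*Real.sqrt (1+a^2) : ℝ) : ℂ)} := by
  have hcharpoly :
      G.charpoly = (speciesBlock ωp2 a).charpoly * (speciesBlock ωp1 b).charpoly := by
    rw [hG, twoStream_matrix_eq_reindex_blockDiagonal, charpoly_reindex, charpoly_blockDiagonal,
      Fin.prod_univ_two]
    rfl
  rw [hcharpoly, roots_mul (mul_ne_zero (charpoly_monic _).ne_zero (charpoly_monic _).ne_zero),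
    roots_charpoly_speciesBlock, roots_charpoly_speciesBlock, add_comm]
  rfl

/-- The eigenvalues (with multiplicity) of the Hermitian matrix `G` of the warm two-stream
G-Hamiltonian structure are exactly `b ωp1² ± ωp1²√(1+b²)` and `a ωp2² ± ωp2²√(1+a²)`. -/
theorem warm_two_stream_G_eigenvalues (ωp1 ωp2 a b : ℝ)
    (h1 : ωp1 ≠ 0) (h2 : ωp2 ≠ 0)
    (G : Matrix (Fin 4) (Fin 4) ℂ)
    (hG : G = !![0, 0, Complex.I*(ωp2:ℂ)^2, 0;
                 0, 0, 0, Complex.I*(ωp1:ℂ)^2;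
                 -Complex.I*(ωp2:ℂ)^2, 0, 2*(a:ℂ)*(ωp2:ℂ)^2, 0;
                 0, -Complex.I*(ωp1:ℂ)^2, 0, 2*(b:ℂ)*(ωp1:ℂ)^2]) :
    G.charpoly.roots =
      {((b*ωp1^2 - ωp1^2*Real.sqrt (1+b^2) : ℝ) : ℂ),
       ((b*ωp1^2 + ωp1^2*Real.sqrt (1+b^2) : ℝ) : ℂ),
       ((a*ωp2^2 - ωp2^2*Real.sqrt (1+a^2) : ℝ) : ℂ),
       ((a*ωp2^2 + ωp2^2*Real.sqrt (1+a^2) : ℝ) : ℂ)} :=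
  warm_two_stream_G_eigenvalues_general ωp1 ωp2 a b G hG
end

section
/- Let ωp1, ωp2, a, b, c, d be real numbers and let A be the complex 4×4 matrix A = [[−2ia, 0, a² − ωp1² − c², −ωp1²], [0, −2ib, −ωp2², b² − ωp2² − d²], [1, 0, 0, 0], [0, 1, 0, 0]]. Then for every complex number ω with (ω − a)² ≠ c² and (ω − b)² ≠ d², the number −iω is an eigenvalue of A (i.e., det(A + iωI) = 0) if and only if ω satisfies the warm two-stream dispersion relation ωp1²/((ω − a)² − c²) + ωp2²/((ω − b)² − d²) = 1. -/
/-! With the 2×2 blocks `M = diag(-2ia, -2ib)` and `K` the upper right block, `A` is the companion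
linearization `fromBlocks M K 1 0` of the quadratic pencil `λ² - λM - K`. Because its lower left
block is the identity, `det (A - λ) = det (λ² - λM - K)` without any commutativity assumption, and
at `λ = -iω` the right side is the `2×2` determinant
`(D₁ - ωp1²)(D₂ - ωp2²) - ωp1² ωp2² = D₁D₂ - ωp1² D₂ - ωp2² D₁` with `D₁ = (ω-a)² - c²`,
`D₂ = (ω-b)² - d²`. Dividing by `D₁D₂ ≠ 0` gives the dispersion relation. -/

open Matrix

theorem div_add_div_eq_one_iff {K : Type*} [Field K] {p q x y : K} (hx : x ≠ 0) (hy : y ≠ 0) :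
    p / x + q / y = 1 ↔ x * y - p * y - q * x = 0 := by
  rw [div_add_div _ _ hx hy, div_eq_one_iff_eq (mul_ne_zero hx hy)]
  constructor <;> intro h <;> linear_combination -h

namespace Matrix

variable {n R : Type*} [Fintype n] [DecidableEq n] [CommRing R]

theorem det_fromBlocks_zero_neg_one_one_zero :
    (fromBlocks 0 (-1) 1 0 : Matrix (n ⊕ n) (n ⊕ n) R).det = 1 := by
  have h : (fromBlocks 0 (-1) 1 0 : Matrix (n ⊕ n) (n ⊕ n) R) =
      fromBlocks 1 (-1) 0 1 * fromBlocks 1 0 1 1 * fromBlocks 1 (-1) 0 1 := by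
    simp [fromBlocks_multiply]
  rw [h, det_mul, det_mul, det_fromBlocks_zero₂₁, det_fromBlocks_zero₁₂, det_one]
  ring

theorem det_fromBlocks_one₂₁ (A B D : Matrix n n R) :
    (fromBlocks A B 1 D).det = (A * D - B).det := by
  have h : fromBlocks A B 1 D =
      fromBlocks 1 A 0 1 * fromBlocks (A * D - B) 0 0 1 * fromBlocks 0 (-1) 1 0 *
        fromBlocks 1 D 0 1 := by
    simp [fromBlocks_multiply]
  rw [h, det_mul, det_mul, det_mul, det_fromBlocks_zero_neg_one_one_zero, det_fromBlocks_zero₂₁,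
    det_fromBlocks_zero₂₁, det_fromBlocks_zero₂₁]
  simp

theorem det_fromBlocks_companion_add_smul_one (M K : Matrix n n R) (μ : R) :
    (fromBlocks M K 1 0 + μ • 1).det = (μ • M + μ ^ 2 • 1 - K).det := by
  rw [← fromBlocks_one, fromBlocks_smul, fromBlocks_add]
  simp only [smul_zero, add_zero, zero_add]
  rw [det_fromBlocks_one₂₁]
  congr 1
  simp [pow_two, smul_smul]

end Matrix

open Complex in
theorem det_warmTwoStream_add_smul_one (ωp1 ωp2 a b c d : ℝ) (ω : ℂ) :
    (!![-2*I*(a:ℂ), 0, (a:ℂ)^2 - (ωp1:ℂ)^2 - (c:ℂ)^2, -(ωp1:ℂ)^2;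
        0, -2*I*(b:ℂ), -(ωp2:ℂ)^2, (b:ℂ)^2 - (ωp2:ℂ)^2 - (d:ℂ)^2;
        1, 0, 0, 0;
        0, 1, 0, 0] + (I * ω) • (1 : Matrix (Fin 4) (Fin 4) ℂ)).det =
      ((ω - a)^2 - (c:ℂ)^2) * ((ω - b)^2 - (d:ℂ)^2)
        - (ωp1:ℂ)^2 * ((ω - b)^2 - (d:ℂ)^2) - (ωp2:ℂ)^2 * ((ω - a)^2 - (c:ℂ)^2) := by
  have hμ_sq : (I * ω) ^ 2 = -ω ^ 2 := by linear_combination ω ^ 2 * I_sq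
  have hμ_mul (x : ℂ) : I * ω * (-2 * I * x) = 2 * x * ω := by linear_combination -2 * x * ω * I_sq
  calc _ = (fromBlocks !![-2*I*(a:ℂ), 0; 0, -2*I*(b:ℂ)]
          !![(a:ℂ)^2 - (ωp1:ℂ)^2 - (c:ℂ)^2, -(ωp1:ℂ)^2; -(ωp2:ℂ)^2, (b:ℂ)^2 - (ωp2:ℂ)^2 - (d:ℂ)^2]
          1 0 + (I * ω) • 1).det := by
        rw [← det_submatrix_equiv_self (finSumFinEquiv (m := 2) (n := 2)).symm]
        congr 1
        ext i j
        fin_cases i <;> fin_cases j <;> rfl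
    _ = _ := by
        rw [det_fromBlocks_companion_add_smul_one, one_fin_two]
        simp only [smul_of, smul_cons, smul_empty, of_add_of, of_sub_of, cons_add_cons, cons_sub_cons,
          empty_add_empty, empty_sub_empty, smul_eq_mul, det_fin_two_of, hμ_sq, hμ_mul, mul_zero, mul_one]
        ring

/-- For the warm two-stream matrix `A`, and any complex `ω` avoiding the resonances
`(ω−a)² = c²`, `(ω−b)² = d²`, the number `−iω` is an eigenvalue of `A` if and only if `ω`
satisfies the warm two-stream dispersion relation. -/
theorem warm_two_stream_dispersion_relation (ωp1 ωp2 a b c d : ℝ)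
    (A : Matrix (Fin 4) (Fin 4) ℂ)
    (hA : A = !![-2*Complex.I*(a:ℂ), 0, (a:ℂ)^2 - (ωp1:ℂ)^2 - (c:ℂ)^2, -(ωp1:ℂ)^2;
                 0, -2*Complex.I*(b:ℂ), -(ωp2:ℂ)^2, (b:ℂ)^2 - (ωp2:ℂ)^2 - (d:ℂ)^2;
                 1, 0, 0, 0;
                 0, 1, 0, 0])
    (ω : ℂ) (hc : (ω - a)^2 ≠ (c:ℂ)^2) (hd : (ω - b)^2 ≠ (d:ℂ)^2) :
    (A + (Complex.I * ω) • (1 : Matrix (Fin 4) (Fin 4) ℂ)).det = 0 ↔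
      (ωp1:ℂ)^2 / ((ω - a)^2 - (c:ℂ)^2) + (ωp2:ℂ)^2 / ((ω - b)^2 - (d:ℂ)^2) = 1 := by
  rw [hA, det_warmTwoStream_add_smul_one,
    div_add_div_eq_one_iff (sub_ne_zero.mpr hc) (sub_ne_zero.mpr hd)]
end

section
/- Let ωp1 > 0 and ωp2 > 0 be real numbers and u a real number. Then the cold two-stream quartic polynomial p(ω) = ω²(ω − u)² − ωp1²(ω − u)² − ωp2²ω² (equivalently, the dispersion relation ωp1²/ω² + ωp2²/(ω − u)² = 1 with denominators cleared) has a complex root ω with nonzero imaginary part if and only if 0 < u² < (ωp1^{2/3} + ωp2^{2/3})³. -/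
/-!
Away from `0` and `u`, the quartic is `ω²(ω - u)²(1 - F ω)` with the dispersion function
`F ω = a²/ω² + b²/(ω - u)²`.

If `ω = x + iy` with `y ≠ 0` satisfies `F ω = 1`, then the real part of this equation minus
`x - u` times its imaginary part gives `a² u x > |ω|⁴ > x⁴`, and symmetrically
(`ω ↦ u - ω` swaps `a` and `b`) `b² u (u - x) > (u - x)⁴`. So `x < a^{2/3} c` and
`u - x < b^{2/3} c` with `c³ = u`; adding and cubing gives `u² < (a^{2/3} + b^{2/3})³`.

Conversely, if `u² < (a^{2/3} + b^{2/3})³`, Radon's inequality gives `F > 1` on `(0, u)`, so the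
quartic has no real root in `[0, u]`. On `(-∞, 0)` the function `F` is strictly increasing, and
on `(u, ∞)` strictly decreasing, so each of these intervals holds at most one real root, and
that root is simple. The quartic therefore has at most two real roots counted with
multiplicity, so at least two of its four complex roots are non-real.
-/

open Polynomial Set

theorem rpow_two_div_three_pow_three {a : ℝ} (ha : 0 ≤ a) :
    (a ^ ((2 : ℝ) / 3)) ^ 3 = a ^ 2 := by
  rw [← Real.rpow_natCast, ← Real.rpow_mul ha]
  norm_num

theorem add_sq_lt_of_pow_three_lt {α β x v : ℝ} (hα : 0 ≤ α) (hβ : 0 ≤ β) (hx : 0 < x)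
    (hv : 0 < v) (hxα : x ^ 3 < α ^ 3 * (x + v)) (hvβ : v ^ 3 < β ^ 3 * (x + v)) :
    (x + v) ^ 2 < (α + β) ^ 3 := by
  set c := (x + v) ^ ((3 : ℕ)⁻¹ : ℝ)
  have hc : c ^ 3 = x + v := Real.rpow_inv_natCast_pow (by positivity) three_ne_zero
  have hc0 : 0 ≤ c := by positivity
  have hxc : x < α * c := lt_of_pow_lt_pow_left₀ 3 (by positivity) (by rwa [mul_pow, hc])
  have hvc : v < β * c := lt_of_pow_lt_pow_left₀ 3 (by positivity) (by rwa [mul_pow, hc])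
  have hsum : (x + v) ^ 3 < (α + β) ^ 3 * (x + v) := by
    calc (x + v) ^ 3 < ((α + β) * c) ^ 3 := by gcongr; linarith
      _ = (α + β) ^ 3 * (x + v) := by rw [mul_pow, hc]
  nlinarith [pow_succ (x + v) 2]

theorem add_pow_three_div_sq_le {α β x v : ℝ} (hα : 0 ≤ α) (hβ : 0 ≤ β) (hx : 0 < x)
    (hv : 0 < v) : (α + β) ^ 3 / (x + v) ^ 2 ≤ α ^ 3 / x ^ 2 + β ^ 3 / v ^ 2 := by
  rw [div_add_div _ _ (by positivity) (by positivity), div_le_div_iff₀ (by positivity)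
    (by positivity)]
  nlinarith [mul_nonneg (sq_nonneg (α * v - β * x))
    (by positivity : 0 ≤ 2 * α * x * v + α * v ^ 2 + β * x ^ 2 + 2 * β * x * v),
    mul_pos hx hv]

namespace ColdTwoStream

section CommRing

variable {R : Type*} [CommRing R]

def quartic (a b u x : R) : R :=
  x ^ 2 * (x - u) ^ 2 - a ^ 2 * (x - u) ^ 2 - b ^ 2 * x ^ 2

theorem quartic_neg (a b u x : R) : quartic a b (-u) (-x) = quartic a b u x := by
  unfold quartic; ring

theorem quartic_sub (a b u x : R) : quartic a b u (u - x) = quartic b a u x := by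
  unfold quartic; ring

noncomputable def polynomial (a b u : R) : R[X] :=
  X ^ 2 * (X - C u) ^ 2 - C (a ^ 2) * (X - C u) ^ 2 - C (b ^ 2) * X ^ 2

theorem eval_polynomial (a b u x : R) : (polynomial a b u).eval x = quartic a b u x := by
  simp [polynomial, quartic]

theorem eval_derivative_polynomial (a b u x : R) :
    (derivative (polynomial a b u)).eval x =
      2 * (x * (x - u) * (2 * x - u) - a ^ 2 * (x - u) - b ^ 2 * x) := by
  simp only [polynomial, derivative_sub, derivative_mul, derivative_sq, derivative_X,
    derivative_C, eval_sub, eval_mul, eval_add, eval_pow, eval_X, eval_C, eval_one, eval_zero]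
  ring

theorem natDegree_polynomial [Nontrivial R] (a b u : R) :
    (polynomial a b u).natDegree = 4 := by
  unfold polynomial
  compute_degree!

end CommRing

section Field

variable {K : Type*} [Field K]

def dispersion (a b u x : K) : K :=
  a ^ 2 / x ^ 2 + b ^ 2 / (x - u) ^ 2

theorem quartic_eq_mul {a b u x : K} (hx : x ≠ 0) (hxu : x - u ≠ 0) :
    quartic a b u x = x ^ 2 * (x - u) ^ 2 * (1 - dispersion a b u x) := by
  unfold quartic dispersion
  field_simp
  ring

theorem quartic_eq_zero_iff {a b u x : K} (hx : x ≠ 0) (hxu : x - u ≠ 0) :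
    quartic a b u x = 0 ↔ dispersion a b u x = 1 := by
  rw [quartic_eq_mul hx hxu, mul_eq_zero,
    or_iff_right (mul_ne_zero (pow_ne_zero 2 hx) (pow_ne_zero 2 hxu)), sub_eq_zero, eq_comm]

end Field

theorem re_pos_and_re_pow_three_lt_of_quartic_eq_zero {a b u : ℝ} {ω : ℂ} (hu : 0 ≤ u)
    (hω : quartic (a : ℂ) b u ω = 0) (him : ω.im ≠ 0) :
    0 < ω.re ∧ ω.re ^ 3 < a ^ 2 * u := by
  have hω0 : ω ≠ 0 := fun h ↦ him (by simp [h])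
  have hωu : ω - u ≠ 0 := fun h ↦ him (by simpa using congrArg Complex.im h)
  have hF := (quartic_eq_zero_iff hω0 hωu).1 hω
  have hre := congrArg Complex.re hF
  have him' := congrArg Complex.im hF
  simp only [dispersion, Complex.add_re, Complex.add_im, Complex.div_re,
    Complex.div_im, pow_two, Complex.mul_re, Complex.mul_im, Complex.ofReal_re,
    Complex.ofReal_im, Complex.sub_re, Complex.sub_im, Complex.one_re, Complex.one_im,
    Complex.normSq_mul] at hre him'
  set x := ω.re
  set y := ω.im
  set A := a ^ 2 / Complex.normSq ω ^ 2
  set B := b ^ 2 / Complex.normSq (ω - u) ^ 2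
  have hS : Complex.normSq ω = x ^ 2 + y ^ 2 := by rw [Complex.normSq_apply]; ring
  have hA : 0 ≤ A := by positivity
  have hB : 0 ≤ B := by positivity
  have hIm : A * x + B * (x - u) = 0 := by
    have : (A * x + B * (x - u)) * (-2 * y) = 0 := by
      simp only [A, B]; linear_combination him'
    simpa [him] using this
  have hRe : A * u * x = 1 + (A + B) * y ^ 2 := by
    linear_combination (by simp only [A, B]; linear_combination hre :
      A * (x ^ 2 - y ^ 2) + B * ((x - u) ^ 2 - y ^ 2) = 1) - (x - u) * hIm
  have hy : 0 < y ^ 2 := by positivity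
  have hS_lt : (x ^ 2 + y ^ 2) ^ 2 ≤ a ^ 2 * u * x := by
    have : 1 ≤ A * u * x := by rw [hRe]; nlinarith
    simp only [A, hS] at this
    rwa [div_mul_eq_mul_div, div_mul_eq_mul_div, one_le_div (by positivity)] at this
  have hx : 0 < x := by
    by_contra! hx
    nlinarith [mul_nonpos_of_nonneg_of_nonpos (by positivity : 0 ≤ a ^ 2 * u) hx]
  refine ⟨hx, lt_of_mul_lt_mul_right ?_ hx.le⟩
  nlinarith

theorem pos_and_sq_lt_of_quartic_eq_zero {a b u : ℝ} (ha : 0 ≤ a) (hb : 0 ≤ b) (hu : 0 ≤ u)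
    {ω : ℂ} (hω : quartic (a : ℂ) b u ω = 0) (him : ω.im ≠ 0) :
    0 < u ∧ u ^ 2 < (a ^ ((2 : ℝ) / 3) + b ^ ((2 : ℝ) / 3)) ^ 3 := by
  obtain ⟨hx, hxa⟩ := re_pos_and_re_pow_three_lt_of_quartic_eq_zero hu hω him
  obtain ⟨hv, hvb⟩ := re_pos_and_re_pow_three_lt_of_quartic_eq_zero (a := b) (b := a)
    (ω := u - ω) hu (by rwa [quartic_sub]) (by simpa using him)
  simp only [Complex.sub_re, Complex.ofReal_re] at hv hvb
  have hxv : ω.re + (u - ω.re) = u := by ring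
  refine ⟨by linarith,
    hxv ▸ add_sq_lt_of_pow_three_lt (by positivity) (by positivity) hx hv ?_ ?_⟩
  · rwa [rpow_two_div_three_pow_three ha, hxv]
  · rwa [rpow_two_div_three_pow_three hb, hxv]

theorem quartic_neg_of_mem_Icc {a b u x : ℝ} (ha : 0 < a) (hb : 0 < b)
    (hu : 0 < u) (hcrit : u ^ 2 < (a ^ ((2 : ℝ) / 3) + b ^ ((2 : ℝ) / 3)) ^ 3)
    (hx : x ∈ Icc 0 u) : quartic a b u x < 0 := by
  rcases hx.1.eq_or_lt with rfl | hx0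
  · simp only [quartic]; nlinarith [mul_pos (mul_pos ha ha) (mul_pos hu hu)]
  rcases hx.2.eq_or_lt with rfl | hxu
  · simp only [quartic]; nlinarith [mul_pos (mul_pos hb hb) (mul_pos hu hu)]
  have hux : 0 < u - x := by linarith
  have hF : 1 < dispersion a b u x := by
    calc 1 < (a ^ ((2 : ℝ) / 3) + b ^ ((2 : ℝ) / 3)) ^ 3 / u ^ 2 := by
          rwa [one_lt_div (by positivity)]
      _ = (a ^ ((2 : ℝ) / 3) + b ^ ((2 : ℝ) / 3)) ^ 3 / (x + (u - x)) ^ 2 := by ring_nf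
      _ ≤ _ := add_pow_three_div_sq_le (by positivity) (by positivity) hx0 hux
      _ = dispersion a b u x := by
          rw [rpow_two_div_three_pow_three ha.le, rpow_two_div_three_pow_three hb.le,
            dispersion, ← neg_sub x u, neg_sq]
  rw [quartic_eq_mul hx0.ne' (by linarith)]
  exact mul_neg_of_pos_of_neg (mul_pos (by positivity) (by nlinarith)) (by linarith)

theorem strictMonoOn_dispersion {a b u : ℝ} (ha : a ≠ 0) (hu : 0 ≤ u) :
    StrictMonoOn (dispersion a b u) (Iio 0) := by
  intro x (hx : x < 0) z (hz : z < 0) hxz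
  apply add_lt_add_of_lt_of_le
  · exact div_lt_div_of_pos_left (by positivity) (by nlinarith) (by nlinarith)
  · exact div_le_div_of_nonneg_left (by positivity) (by nlinarith) (by nlinarith)

theorem eq_of_quartic_eq_zero_of_neg {a b u x z : ℝ} (ha : a ≠ 0) (hu : 0 ≤ u)
    (hx : x < 0) (hz : z < 0) (hqx : quartic a b u x = 0)
    (hqz : quartic a b u z = 0) : x = z := by
  rw [quartic_eq_zero_iff hx.ne (by linarith)] at hqx
  rw [quartic_eq_zero_iff hz.ne (by linarith)] at hqz
  exact (strictMonoOn_dispersion ha hu).injOn hx hz (hqx.trans hqz.symm)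

theorem card_le_two_of_quartic_eq_zero {a b u : ℝ} (ha : 0 < a) (hb : 0 < b)
    (hu : 0 < u) (hcrit : u ^ 2 < (a ^ ((2 : ℝ) / 3) + b ^ ((2 : ℝ) / 3)) ^ 3) {s : Finset ℝ}
    (hs : ∀ x ∈ s, quartic a b u x = 0) : s.card ≤ 2 := by
  have hgt : ∀ x ∈ s, ¬x < 0 → u < x := fun x hx hx0 ↦ by
    by_contra! hxu
    exact (quartic_neg_of_mem_Icc ha hb hu hcrit ⟨not_lt.1 hx0, hxu⟩).ne (hs x hx)
  have hneg : {x ∈ s | x < 0}.card ≤ 1 := Finset.card_le_one.2 fun x hx z hz ↦ by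
    simp only [Finset.mem_filter] at hx hz
    exact eq_of_quartic_eq_zero_of_neg ha.ne' hu.le hx.2 hz.2 (hs x hx.1) (hs z hz.1)
  have hpos : {x ∈ s | ¬x < 0}.card ≤ 1 := Finset.card_le_one.2 fun x hx z hz ↦ by
    simp only [Finset.mem_filter] at hx hz
    have := eq_of_quartic_eq_zero_of_neg (a := b) (b := a) hb.ne' hu.le
      (sub_neg.2 (hgt x hx.1 hx.2)) (sub_neg.2 (hgt z hz.1 hz.2))
      (by rw [quartic_sub, hs x hx.1]) (by rw [quartic_sub, hs z hz.1])
    linarith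
  have := Finset.card_filter_add_card_filter_not (s := s) (· < 0)
  omega

theorem half_derivative_ne_zero_of_quartic_eq_zero {a b u x : ℝ} (hu : 0 ≤ u)
    (hx : x < 0 ∨ u < x) (hq : quartic a b u x = 0) :
    x * (x - u) * (2 * x - u) - a ^ 2 * (x - u) - b ^ 2 * x ≠ 0 := by
  intro hd
  unfold quartic at hq
  rcases hx with hx | hx
  · have h : (x - u) * (a ^ 2 * u - x ^ 3) = 0 := by linear_combination hq - x * hd
    have hx3 : a ^ 2 * u = x ^ 3 := by
      linear_combination (mul_eq_zero.1 h).resolve_left (by linarith)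
    nlinarith [pow_pos (neg_pos.2 hx) 3, mul_nonneg (sq_nonneg a) hu]
  · have h : x * ((x - u) ^ 3 + b ^ 2 * u) = 0 := by linear_combination (x - u) * hd - hq
    have hx3 : (x - u) ^ 3 = -(b ^ 2 * u) := by
      linear_combination (mul_eq_zero.1 h).resolve_left (by linarith)
    nlinarith [pow_pos (sub_pos.2 hx) 3, mul_nonneg (sq_nonneg b) hu]

theorem exists_quartic_eq_zero_im_ne_zero {a b u : ℝ} (ha : 0 < a) (hb : 0 < b)
    (hu : 0 < u) (hcrit : u ^ 2 < (a ^ ((2 : ℝ) / 3) + b ^ ((2 : ℝ) / 3)) ^ 3) :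
    ∃ ω : ℂ, quartic (a : ℂ) b u ω = 0 ∧ ω.im ≠ 0 := by
  classical
  by_contra! hreal
  set P := polynomial (a : ℂ) b u
  have hP0 : P ≠ 0 := ne_zero_of_natDegree_gt (n := 0) (by simp [P, natDegree_polynomial])
  have hroot : ∀ z ∈ P.roots, (z.re : ℂ) = z ∧ quartic a b u z.re = 0 := by
    intro z hz
    rw [mem_roots hP0, IsRoot, eval_polynomial] at hz
    have hz_re : (z.re : ℂ) = z := Complex.ext rfl (by simp [hreal z hz])
    refine ⟨hz_re, Complex.ofReal_injective ?_⟩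
    rw [← hz_re] at hz
    simpa [quartic] using hz
  have hnodup : P.roots.Nodup := by
    refine Multiset.nodup_iff_count_le_one.2 fun z ↦ ?_
    rw [count_roots]
    by_contra! hmult
    obtain ⟨hz, hz'⟩ := (one_lt_rootMultiplicity_iff_isRoot hP0).1 hmult
    obtain ⟨hz_re, hq⟩ := hroot z ((mem_roots hP0).2 hz)
    have hx : z.re < 0 ∨ u < z.re := by
      by_contra! h
      exact (quartic_neg_of_mem_Icc ha hb hu hcrit h).ne hq
    apply half_derivative_ne_zero_of_quartic_eq_zero hu.le hx hq
    rw [IsRoot, ← hz_re, eval_derivative_polynomial] at hz'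
    exact_mod_cast (mul_eq_zero.1 hz').resolve_left two_ne_zero
  have hcard : (P.roots.toFinset.image Complex.re).card = 4 := by
    rw [Finset.card_image_of_injOn, Multiset.toFinset_card_of_nodup hnodup,
      IsAlgClosed.card_roots_eq_natDegree, natDegree_polynomial]
    intro z hz w hw hzw
    rw [← (hroot z (Multiset.mem_toFinset.1 hz)).1, ← (hroot w (Multiset.mem_toFinset.1 hw)).1,
      hzw]
  have := card_le_two_of_quartic_eq_zero ha hb hu hcrit (s := P.roots.toFinset.image Complex.re)
    (by
      simp only [Finset.mem_image, Multiset.mem_toFinset]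
      rintro _ ⟨z, hz, rfl⟩
      exact (hroot z hz).2)
  omega

end ColdTwoStream

/-- Cold two-stream instability criterion: the quartic
`p(ω) = ω²(ω−u)² − ωp1²(ω−u)² − ωp2²ω²` has a root `ω ∈ ℂ` with nonzero imaginary part
if and only if `0 < u² < (ωp1^{2/3} + ωp2^{2/3})³`. -/
theorem cold_two_stream_instability (ωp1 ωp2 u : ℝ) (h1 : 0 < ωp1) (h2 : 0 < ωp2) :
    (∃ ω : ℂ, ω^2 * (ω - u)^2 - (ωp1:ℂ)^2 * (ω - u)^2 - (ωp2:ℂ)^2 * ω^2 = 0 ∧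
      ω.im ≠ 0) ↔
    (0 < u^2 ∧ u^2 < (ωp1 ^ ((2:ℝ)/3) + ωp2 ^ ((2:ℝ)/3))^3) := by
  change (∃ ω : ℂ, ColdTwoStream.quartic (ωp1 : ℂ) ωp2 u ω = 0 ∧ ω.im ≠ 0) ↔ _
  wlog hu : 0 ≤ u generalizing u
  · rw [← neg_sq, ← (Equiv.neg ℂ).exists_congr_right]
    simpa [← ColdTwoStream.quartic_neg (u := (u : ℂ))] using this (-u) (by linarith)
  constructor
  · rintro ⟨ω, hω, him⟩
    obtain ⟨hu, hcrit⟩ := ColdTwoStream.pos_and_sq_lt_of_quartic_eq_zero h1.le h2.le hu hω him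
    exact ⟨by positivity, hcrit⟩
  · rintro ⟨hu2, hcrit⟩
    exact ColdTwoStream.exists_quartic_eq_zero_im_ne_zero h1 h2
      (hu.lt_of_ne (by rintro rfl; simp at hu2)) hcrit
end
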